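/- Let M be a matroid on {1, …, n} with base family 𝓑, and let ℓ ≥ 0 be such that S_ℓ(𝓑) is nonempty. Then there exists a matroid on {1, …, n} whose family of bases is exactly S_ℓ(𝓑). (This is the combinatorial content of: if I is a matroidal ideal, then the ideal J_ℓ(I) generated by the ℓ-th multigraded shifts of I is matroidal for every ℓ = 0, …, projdim(I).) -/

import Mathlib

/-- Two sets are *adjacent* if each has exactly one element outside the other. -/
def AdjacentSets {α : Type*} (B C : Set α) : Prop :=
  (B \ C).ncard = 1 ∧ (C \ B).ncard = 1

/-- The *adjacency family* of a family of sets: all unions of adjacent pairs of members. -/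
def adjFam {α : Type*} (𝓕 : Set (Set α)) : Set (Set α) :=
  {U | ∃ B ∈ 𝓕, ∃ C ∈ 𝓕, AdjacentSets B C ∧ U = B ∪ C}

/-- For a family `𝓑` of subsets of `{1, …, n}` (ordered so that `i >_lex j ↔ i < j` as
integers) and `B ∈ 𝓑`, the set `set(B)` consists of all `e ∉ B` for which there exists
`t ∈ B` with `e >_lex t` (that is, `e < t`) and `(B \ {t}) ∪ {e} ∈ 𝓑`. -/
def lexSet {n : ℕ} (𝓑 : Set (Set (Fin n))) (B : Set (Fin n)) : Set (Fin n) :=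
  {e | e ∉ B ∧ ∃ t ∈ B, e < t ∧ insert e (B \ {t}) ∈ 𝓑}

/-- `S_ℓ(𝓑) = { B ∪ E : B ∈ 𝓑, E ⊆ set(B), |E| = ℓ }`, the family of supports of the
`ℓ`-th multigraded shifts of the matroidal ideal of `𝓑`. -/
def shiftFam {n : ℕ} (𝓑 : Set (Set (Fin n))) (ℓ : ℕ) : Set (Set (Fin n)) :=
  {U | ∃ B ∈ 𝓑, ∃ E, E ⊆ lexSet 𝓑 B ∧ E.ncard = ℓ ∧ U = B ∪ E}

/-!
`S_ℓ(𝓑)` is the family of `(r + ℓ)`-sets of non-loops containing a base of `M`, i.e. the base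
family of the `ℓ`-th elongation of `M` with its loops deleted, and base exchange for that family
is a direct consequence of base exchange in `M`. Given such a set `U`, let `B ⊆ U` be the
colex-largest base inside `U`. Each `e ∈ U \ B` is a non-loop, so it can be exchanged into `B`
against some `t` of its fundamental circuit; colex-maximality of `B` forces `e < t`, so
`U \ B ⊆ set(B)`.
-/

open Set

lemma Finset.Colex.toColex_lt_toColex_insert_erase {α : Type*} [PartialOrder α] [DecidableEq α]
    {s : Finset α} {t e : α} (ht : t ∈ s) (he : e ∉ s) (hte : t < e) :
    toColex s < toColex (insert e (s.erase t)) := by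
  have := (insert_lt_insert (s := s.erase t) (notMem_erase t s)
    (fun h ↦ he (mem_of_mem_erase h))).2 hte
  rwa [insert_erase ht] at this

namespace Matroid

variable {α : Type*} {M : Matroid α} {B U : Set α} {e f : α} {ℓ : ℕ}

lemma IsBase.exists_isBase_insert_sdiff (hB : M.IsBase B) (he : M.IsNonloop e) (heB : e ∉ B) :
    ∃ t ∈ B, M.IsBase (insert e (B \ {t})) := by
  have hC := hB.fundCircuit_isCircuit he.mem_ground heB
  obtain ⟨t, htC, hte⟩ : ∃ t ∈ M.fundCircuit e B, t ≠ e := by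
    by_contra! h
    have : M.fundCircuit e B = {e} := hC.nonempty.subset_singleton_iff.1 h
    exact he.not_isLoop (singleton_isCircuit.1 (this ▸ hC))
  have htB : t ∈ B := (M.fundCircuit_subset_insert e B htC).resolve_left hte
  rw [hB.indep.mem_fundCircuit_iff (hB.closure_eq ▸ he.mem_ground) heB] at htC
  refine ⟨t, htB, ?_⟩
  rw [insert_sdiff_singleton_comm hte.symm]
  exact hB.exchange_isBase_of_indep' htB heB htC

open Finset.Colex in
lemma exists_isBase_subset_forall_exchange_lt [LinearOrder α] [Finite α]
    (hU : ∃ B, M.IsBase B ∧ B ⊆ U) :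
    ∃ B, M.IsBase B ∧ B ⊆ U ∧
      ∀ ⦃e t⦄, e ∈ U → e ∉ B → t ∈ B → M.IsBase (insert e (B \ {t})) → e < t := by
  classical
  obtain ⟨B, ⟨hB, hBU⟩, hmax⟩ := (toFinite {B | M.IsBase B ∧ B ⊆ U}).exists_maximalFor
    (fun B ↦ toColex (toFinite B).toFinset) _ hU
  refine ⟨B, hB, hBU, fun e t heU heB htB hB' ↦ ?_⟩
  by_contra! hte
  have hlt := toColex_lt_toColex_insert_erase ((toFinite B).mem_toFinset.2 htB)
    (mt (toFinite B).mem_toFinset.1 heB) (hte.lt_of_ne (ne_of_mem_of_not_mem htB heB))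
  have hswap : (toFinite (insert e (B \ {t}))).toFinset =
      insert e ((toFinite B).toFinset.erase t) := by
    ext; simp [and_comm]
  rw [← hswap] at hlt
  exact hlt.not_ge (hmax ⟨hB', insert_subset heU (sdiff_subset.trans hBU)⟩ hlt.le)

/-- The bases of the `ℓ`-th elongation of `M` with its loops deleted. -/
def elongBases (M : Matroid α) (ℓ : ℕ) : Set (Set α) :=
  {U | (∀ e ∈ U, M.IsNonloop e) ∧ ∃ B, M.IsBase B ∧ B ⊆ U ∧ U.ncard = B.ncard + ℓ}

lemma ncard_eq_of_mem_elongBases (hU : U ∈ M.elongBases ℓ) (hB : M.IsBase B) :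
    U.ncard = B.ncard + ℓ := by
  obtain ⟨-, B', hB', -, hcard⟩ := hU
  rw [hcard, hB'.ncard_eq_ncard_of_isBase hB]

lemma finite_of_mem_elongBases [M.Finite] (hU : U ∈ M.elongBases ℓ) : U.Finite :=
  M.ground_finite.subset fun e he ↦ (hU.1 e he).mem_ground

lemma insert_sdiff_mem_elongBases (hU : U ∈ M.elongBases ℓ) (heU : e ∈ U) (hfU : f ∉ U)
    (hf : M.IsNonloop f) (hB : M.IsBase B) (hBU : B ⊆ insert f (U \ {e})) :
    insert f (U \ {e}) ∈ M.elongBases ℓ := by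
  refine ⟨?_, B, hB, hBU, ?_⟩
  · rintro x (rfl | hx)
    exacts [hf, hU.1 x hx.1]
  · rw [ncard_exchange hfU heU, ncard_eq_of_mem_elongBases hU hB]

lemma elongBases_exchange [M.Finite] (ℓ : ℕ) : ExchangeProperty (· ∈ M.elongBases ℓ) := by
  rintro U₁ U₂ hU₁ hU₂ e ⟨heU₁, heU₂⟩
  obtain ⟨B₁, hB₁, hB₁U₁, -⟩ := hU₁.2
  obtain ⟨B₂, hB₂, hB₂U₂, -⟩ := hU₂.2
  suffices ∃ f ∈ U₂ \ U₁, ∃ B, M.IsBase B ∧ B ⊆ insert f (U₁ \ {e}) by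
    obtain ⟨f, hf, B, hB, hBU⟩ := this
    exact ⟨f, hf, insert_sdiff_mem_elongBases hU₁ heU₁ hf.2 (hU₂.1 f hf.1) hB hBU⟩
  by_cases hspan : ∃ B, M.IsBase B ∧ B ⊆ U₁ \ {e}
  · obtain ⟨g, hg⟩ : (U₂ \ U₁).Nonempty := by
      rw [nonempty_iff_ne_empty, Ne, sdiff_eq_empty]
      refine fun hsub ↦ heU₂ ?_
      rwa [eq_of_subset_of_ncard_le hsub (by rw [ncard_eq_of_mem_elongBases hU₁ hB₁,
        ncard_eq_of_mem_elongBases hU₂ hB₁]) (finite_of_mem_elongBases hU₁)]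
    obtain ⟨B, hB, hBU⟩ := hspan
    exact ⟨g, hg, B, hB, hBU.trans (subset_insert _ _)⟩
  · have heB₁ : e ∈ B₁ := by_contra fun h ↦ hspan ⟨B₁, hB₁, subset_sdiff_singleton hB₁U₁ h⟩
    obtain ⟨f, ⟨hfB₂, hfB₁⟩, hB⟩ := hB₁.exchange hB₂ ⟨heB₁, fun h ↦ heU₂ (hB₂U₂ h)⟩
    have hBU : insert f (B₁ \ {e}) ⊆ insert f (U₁ \ {e}) :=
      insert_subset_insert (sdiff_subset_sdiff_left hB₁U₁)
    have hfU₁ : f ∉ U₁ := fun hfU₁ ↦ by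
      have hfe : f ≠ e := (ne_of_mem_of_not_mem heB₁ hfB₁).symm
      rw [insert_eq_of_mem (s := U₁ \ {e}) ⟨hfU₁, hfe⟩] at hBU
      exact hspan ⟨_, hB, hBU⟩
    exact ⟨f, ⟨hB₂U₂ hfB₂, hfU₁⟩, _, hB, hBU⟩

end Matroid

lemma shiftFam_setOf_isBase {n : ℕ} (M : Matroid (Fin n)) (ℓ : ℕ) :
    shiftFam {B | M.IsBase B} ℓ = M.elongBases ℓ := by
  ext U
  constructor
  · rintro ⟨B, hB, E, hE, hEcard, rfl⟩
    refine ⟨?_, B, hB, subset_union_left, ?_⟩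
    · rintro e (heB | heE)
      · exact hB.indep.isNonloop_of_mem heB
      · obtain ⟨-, t, -, -, hB'⟩ := hE heE
        exact (hB' : M.IsBase _).indep.isNonloop_of_mem (mem_insert e _)
    · have hdisj : Disjoint B E := disjoint_right.2 fun e he ↦ (hE he).1
      rw [ncard_union_eq hdisj, hEcard]
  · intro hU
    obtain ⟨B₀, hB₀, hB₀U, -⟩ := hU.2
    obtain ⟨B, hB, hBU, hlt⟩ := Matroid.exists_isBase_subset_forall_exchange_lt ⟨B₀, hB₀, hB₀U⟩
    refine ⟨B, hB, U \ B, fun e ⟨heU, heB⟩ ↦ ?_, ?_, (union_sdiff_cancel hBU).symm⟩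
    · obtain ⟨t, htB, ht⟩ := hB.exists_isBase_insert_sdiff (hU.1 e heU) heB
      exact ⟨heB, t, htB, hlt heU heB htB ht, ht⟩
    · rw [ncard_sdiff hBU, Matroid.ncard_eq_of_mem_elongBases hU hB]
      omega

theorem shiftFam_isBaseFamily_general {n : ℕ} (M : Matroid (Fin n))
    (𝓑 : Set (Set (Fin n))) (h𝓑 : 𝓑 = {B | M.IsBase B})
    (ℓ : ℕ) (hne : (shiftFam 𝓑 ℓ).Nonempty) :
    ∃ M' : Matroid (Fin n), M'.E = Set.univ ∧ {B | M'.IsBase B} = shiftFam 𝓑 ℓ := by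
  subst h𝓑
  rw [shiftFam_setOf_isBase] at hne ⊢
  exact ⟨Matroid.ofIsBaseOfFinite finite_univ (· ∈ M.elongBases ℓ) hne (M.elongBases_exchange ℓ)
    (fun _ _ ↦ subset_univ _), rfl, rfl⟩

/-- Let `M` be a matroid on `{1, …, n}` with base family `𝓑`, and let
`ℓ ≥ 0` be such that `S_ℓ(𝓑)` is nonempty.  Then there exists a matroid on `{1, …, n}`
whose family of bases is exactly `S_ℓ(𝓑)`.  (This is the combinatorial content of: if
`I` is a matroidal ideal, then the ideal `J_ℓ(I)` generated by the `ℓ`-th multigraded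
shifts of `I` is matroidal for every `ℓ = 0, …, projdim(I)`.) -/
theorem shiftFam_isBaseFamily {n : ℕ} (M : Matroid (Fin n))
    (hE : M.E = Set.univ) (𝓑 : Set (Set (Fin n))) (h𝓑 : 𝓑 = {B | M.IsBase B})
    (ℓ : ℕ) (hne : (shiftFam 𝓑 ℓ).Nonempty) :
    ∃ M' : Matroid (Fin n), M'.E = Set.univ ∧ {B | M'.IsBase B} = shiftFam 𝓑 ℓ :=
  shiftFam_isBaseFamily_general M 𝓑 h𝓑 ℓ hne
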